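/- LOO is rank-stable under strictly increasing score transformations: if f : ℝ → ℝ is strictly increasing and U' = f ∘ U, then for any two datapoints i, j, the LOO value of i under U is strictly less than that of j under U if and only if the same strict ordering holds under U'; i.e., U(D) − U(D\{i}) < U(D) − U(D\{j}) iff U'(D) − U'(D\{i}) < U'(D) − U'(D\{j}). -/

import Mathlib

theorem loo_rank_stable_of_strictMono_general {ι : Type*} [DecidableEq ι]
    (D : Finset ι) (U : Finset ι → ℝ) (f : ℝ → ℝ) (hf : StrictMono f)
    (i j : ι) :
    (U D - U (D.erase i) < U D - U (D.erase j)) ↔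
      ((f ∘ U) D - (f ∘ U) (D.erase i) < (f ∘ U) D - (f ∘ U) (D.erase j)) := by
  simp only [Function.comp_apply, sub_lt_sub_iff_left, hf.lt_iff_lt]

/-- LOO is rank-stable under strictly increasing score transformations: with
`U' = f ∘ U` for strictly increasing `f`, the strict ordering of leave-one-out values
of any two datapoints `i, j` is the same under `U` and `U'`. -/
theorem loo_rank_stable_of_strictMono {ι : Type*} [DecidableEq ι]
    (D : Finset ι) (U : Finset ι → ℝ) (f : ℝ → ℝ) (hf : StrictMono f)
    (i j : ι) (hi : i ∈ D) (hj : j ∈ D) :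
    (U D - U (D.erase i) < U D - U (D.erase j)) ↔
      ((f ∘ U) D - (f ∘ U) (D.erase i) < (f ∘ U) D - (f ∘ U) (D.erase j)) :=
  loo_rank_stable_of_strictMono_general D U f hf i j
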